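/- arXiv:1605.07862 — 3 statements merged into one kernel-verified Lean document; each statement's English description precedes it below -/
import Mathlib

section
/- Let V ⊆ ℂ be open and let x, y, w : ℂ → ℂ be functions satisfying the ODE system (★) at every point of V. Let a, b, c, d ∈ ℂ with ad − bc = 1, and let U ⊆ ℂ be an open set such that for every t ∈ U one has ct + d ≠ 0 and (at + b)/(ct + d) ∈ V. Define x^A(t) = (ct + d)⁻¹ · x((at + b)/(ct + d)), y^A(t) = (ct + d)⁻¹ · y((at + b)/(ct + d)), and w^A(t) = (ct + d)⁻² · w((at + b)/(ct + d)) − c/(ct + d). Then the triple (x^A, y^A, w^A) satisfies the ODE system (★) at every point of U. -/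
/-!
Since `ad - bc = 1`, the Möbius map `g t = (at + b)/(ct + d)` has derivative `(ct + d)⁻²`, so by
the chain rule `t ↦ (ct + d)⁻ᵏ f (g t)` has derivative
`-k c (ct + d)⁻ᵏ⁻¹ f (g t) + (ct + d)⁻ᵏ⁻² f' (g t)`. With weight 1 for `x, y` and weight 2 for
`w`, the cross terms `-c (ct + d)⁻² x` and `-2c (ct + d)⁻³ w` produced this way are exactly those
created by the shift `-c/(ct + d)` in `w^A`, so (★) for the transformed triple reduces to (★) at
`g t` multiplied by `(ct + d)⁻³` resp. `(ct + d)⁻⁴`.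
-/

open Complex

section Moebius

variable {a b c d t : ℂ}

theorem hasDerivAt_moebius (hdet : a * d - b * c = 1) (ht : c * t + d ≠ 0) :
    HasDerivAt (fun t => (a * t + b) / (c * t + d)) ((c * t + d) ^ 2)⁻¹ t := by
  refine (((hasDerivAt_const_mul a).add_const b).fun_div
    ((hasDerivAt_const_mul c).add_const d) ht).congr_deriv ?_
  rw [show a * (c * t + d) - (a * t + b) * c = 1 by linear_combination hdet, one_div]

theorem HasDerivAt.inv_pow_mul_comp_moebius {f : ℂ → ℂ} {f' : ℂ} (k : ℕ)
    (hdet : a * d - b * c = 1) (ht : c * t + d ≠ 0)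
    (hf : HasDerivAt f f' ((a * t + b) / (c * t + d))) :
    HasDerivAt (fun t => ((c * t + d) ^ k)⁻¹ * f ((a * t + b) / (c * t + d)))
      (-(k * c) / (c * t + d) ^ (k + 1) * f ((a * t + b) / (c * t + d)) +
        f' / (c * t + d) ^ (k + 2)) t := by
  refine (((((hasDerivAt_const_mul c).add_const d).fun_pow k).inv (pow_ne_zero k ht)).fun_mul
    (hf.comp t (hasDerivAt_moebius hdet ht))).congr_deriv ?_
  simp only [Function.comp_apply, Pi.inv_apply]
  generalize c * t + d = e at ht ⊢
  rcases k with _ | k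
  · simp [div_eq_mul_inv]
  · simp only [Nat.add_sub_cancel]
    field_simp
    ring

end Moebius

theorem transformed_triple_satisfies_ode_general
    (V : Set ℂ) (x y w : ℂ → ℂ)
    (hx : ∀ t ∈ V, HasDerivAt x (x t * (2 * (y t) ^ 2 - (x t) ^ 2 + w t)) t)
    (hy : ∀ t ∈ V, HasDerivAt y (y t * (2 * (x t) ^ 2 - (y t) ^ 2 + w t)) t)
    (hw : ∀ t ∈ V, HasDerivAt w ((w t) ^ 2 - (x t) ^ 4) t)
    (a b c d : ℂ) (hdet : a * d - b * c = 1)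
    (U : Set ℂ)
    (hU1 : ∀ t ∈ U, c * t + d ≠ 0)
    (hU2 : ∀ t ∈ U, (a * t + b) / (c * t + d) ∈ V)
    (xA yA wA : ℂ → ℂ)
    (hxA : ∀ t, xA t = (c * t + d)⁻¹ * x ((a * t + b) / (c * t + d)))
    (hyA : ∀ t, yA t = (c * t + d)⁻¹ * y ((a * t + b) / (c * t + d)))
    (hwA : ∀ t, wA t = ((c * t + d) ^ 2)⁻¹ * w ((a * t + b) / (c * t + d)) - c / (c * t + d)) :
    ∀ t ∈ U,
      HasDerivAt xA (xA t * (2 * (yA t) ^ 2 - (xA t) ^ 2 + wA t)) t ∧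
      HasDerivAt yA (yA t * (2 * (xA t) ^ 2 - (yA t) ^ 2 + wA t)) t ∧
      HasDerivAt wA ((wA t) ^ 2 - (xA t) ^ 4) t := by
  obtain rfl : xA = _ := funext hxA
  obtain rfl : yA = _ := funext hyA
  obtain rfl : wA = _ := funext hwA
  intro t ht
  have he := hU1 t ht
  have hs := hU2 t ht
  have hX := (hx _ hs).inv_pow_mul_comp_moebius 1 hdet he
  have hY := (hy _ hs).inv_pow_mul_comp_moebius 1 hdet he
  have hW := ((hw _ hs).inv_pow_mul_comp_moebius 2 hdet he).fun_sub
    ((hasDerivAt_const t c).fun_div ((hasDerivAt_const_mul c).add_const d) he)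
  simp only [pow_one, Nat.cast_one] at hX hY
  refine ⟨hX.congr_deriv ?_, hY.congr_deriv ?_, hW.congr_deriv ?_⟩ <;>
  · beta_reduce
    generalize (a * t + b) / (c * t + d) = s
    generalize c * t + d = e at he ⊢
    field_simp
    ring

/-- If `(x, y, w)` satisfies the ODE system (★) on an open set `V ⊆ ℂ`, and
`A = (a, b; c, d) ∈ SL(2, ℂ)`, then the transformed triple `(x^A, y^A, w^A)` satisfies
the ODE system (★) on any open set `U` on which the Möbius transformation is defined
and maps into `V`. -/
theorem transformed_triple_satisfies_ode
    (V : Set ℂ) (hV : IsOpen V) (x y w : ℂ → ℂ)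
    (hx : ∀ t ∈ V, HasDerivAt x (x t * (2 * (y t) ^ 2 - (x t) ^ 2 + w t)) t)
    (hy : ∀ t ∈ V, HasDerivAt y (y t * (2 * (x t) ^ 2 - (y t) ^ 2 + w t)) t)
    (hw : ∀ t ∈ V, HasDerivAt w ((w t) ^ 2 - (x t) ^ 4) t)
    (a b c d : ℂ) (hdet : a * d - b * c = 1)
    (U : Set ℂ) (hU : IsOpen U)
    (hU1 : ∀ t ∈ U, c * t + d ≠ 0)
    (hU2 : ∀ t ∈ U, (a * t + b) / (c * t + d) ∈ V)
    (xA yA wA : ℂ → ℂ)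
    (hxA : ∀ t, xA t = (c * t + d)⁻¹ * x ((a * t + b) / (c * t + d)))
    (hyA : ∀ t, yA t = (c * t + d)⁻¹ * y ((a * t + b) / (c * t + d)))
    (hwA : ∀ t, wA t = ((c * t + d) ^ 2)⁻¹ * w ((a * t + b) / (c * t + d)) - c / (c * t + d)) :
    ∀ t ∈ U,
      HasDerivAt xA (xA t * (2 * (yA t) ^ 2 - (xA t) ^ 2 + wA t)) t ∧
      HasDerivAt yA (yA t * (2 * (xA t) ^ 2 - (yA t) ^ 2 + wA t)) t ∧
      HasDerivAt wA ((wA t) ^ 2 - (xA t) ^ 4) t :=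
  transformed_triple_satisfies_ode_general V x y w hx hy hw a b c d hdet U hU1 hU2 xA yA wA hxA hyA
    hwA
end

section
/- For every q ∈ ℂ with |q| < 1, the identity q²·(∑_{n∈ℤ} q^{2n(n+1)})⁴ = 4·(∑_{n∈ℤ} q^{4n²})²·(∑_{n∈ℤ} q^{(2n+1)²})² holds. (Equivalently, with x(q) = θ₃(q⁸)², y(q) = θ₂(q⁸)², z(q) = θ₂(q⁴)², one has z(q)² = 4·x(q)·y(q).) -/
/-!
Write `A = ∑ q^(2n(n+1))`, `B = ∑ q^(4n²)`, `C = ∑ q^(4n(n+1))`. In the double series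
`A² = ∑_{m,n} q^(2m(m+1) + 2n(n+1))`, pairs with `m + n` even are `(a + b, a - b)` and give the
exponent `4a(a+1) + 4b²`, pairs with `m + n` odd are `(a + b, a - b - 1)` and give `4a² + 4b(b+1)`.
Hence `A² = 2BC`, and since `(2n+1)² = 1 + 4n(n+1)` the right-hand side is `4B²(qC)² = q²A⁴`.
-/

theorem Int.mul_mul_add_one_nonneg {c : ℤ} (hc : 0 ≤ c) (n : ℤ) : 0 ≤ c * n * (n + 1) := by
  rw [mul_assoc]
  refine mul_nonneg hc ?_
  rcases le_or_gt 0 n with h | h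
  · exact mul_nonneg h (by omega)
  · exact mul_nonneg_of_nonpos_of_nonpos h.le (by omega)

def Int.evenOddProdEquiv : (ℤ × ℤ) ⊕ (ℤ × ℤ) ≃ ℤ × ℤ where
  toFun := Sum.elim (fun p => (p.1 + p.2, p.1 - p.2)) (fun p => (p.1 + p.2, p.1 - p.2 - 1))
  invFun p :=
    if 2 ∣ p.1 + p.2 then .inl ((p.1 + p.2) / 2, (p.1 - p.2) / 2)
    else .inr ((p.1 + p.2 + 1) / 2, (p.1 - p.2 - 1) / 2)
  left_inv := by
    rintro (⟨a, b⟩ | ⟨a, b⟩)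
    · have h : 2 ∣ a + b + (a - b) := ⟨a, by ring⟩
      dsimp only [Sum.elim_inl]
      rw [if_pos h, Sum.inl.injEq, Prod.mk.injEq]
      omega
    · have h : ¬2 ∣ a + b + (a - b - 1) := by omega
      dsimp only [Sum.elim_inr]
      rw [if_neg h, Sum.inr.injEq, Prod.mk.injEq]
      omega
  right_inv := by
    rintro ⟨m, n⟩
    dsimp only
    split_ifs <;> simp only [Sum.elim_inl, Sum.elim_inr, Prod.mk.injEq] <;> omega

theorem Int.tsum_prod_eq_tsum_even_add_tsum_odd {α : Type*} [AddCommGroup α] [UniformSpace α]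
    [IsUniformAddGroup α] [CompleteSpace α] [T2Space α] {f : ℤ × ℤ → α} (hf : Summable f) :
    ∑' p, f p =
      ∑' p : ℤ × ℤ, f (p.1 + p.2, p.1 - p.2) + ∑' p : ℤ × ℤ, f (p.1 + p.2, p.1 - p.2 - 1) := by
  have hf' : Summable (f ∘ Int.evenOddProdEquiv) := Int.evenOddProdEquiv.summable_iff.2 hf
  rw [← Int.evenOddProdEquiv.tsum_eq]
  exact Summable.tsum_sum (hf'.comp_injective Sum.inl_injective)
    (hf'.comp_injective Sum.inr_injective)

theorem zpow_add_of_nonneg₀ {G₀ : Type*} [GroupWithZero G₀] (a : G₀) {m n : ℤ} (hm : 0 ≤ m)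
    (hn : 0 ≤ n) : a ^ (m + n) = a ^ m * a ^ n := by
  lift m to ℕ using hm
  lift n to ℕ using hn
  exact_mod_cast pow_add a m n

theorem norm_zpow_le_pow_of_le {𝕜 : Type*} [NormedDivisionRing 𝕜] {q : 𝕜} (hq : ‖q‖ ≤ 1)
    {n : ℕ} {k : ℤ} (h : n ≤ k) : ‖q ^ k‖ ≤ ‖q‖ ^ n := by
  lift k to ℕ using (Int.natCast_nonneg n).trans h
  rw [zpow_natCast, norm_pow]
  exact pow_le_pow_of_le_one (norm_nonneg q) hq (by exact_mod_cast h)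

theorem summable_norm_zpow_of_le {𝕜 : Type*} [NormedDivisionRing 𝕜] {q : 𝕜} (hq : ‖q‖ < 1)
    {e : ℤ → ℤ} (he : ∀ n, n ≤ e n ∧ -(n + 1) ≤ e n) : Summable fun n => ‖q ^ e n‖ := by
  have hgeom := summable_geometric_of_lt_one (norm_nonneg q) hq
  refine .of_nat_of_neg_add_one ?_ ?_ <;>
    refine hgeom.of_nonneg_of_le (fun _ => norm_nonneg _) fun n => norm_zpow_le_pow_of_le hq.le ?_
  · exact (he n).1
  · have := (he (-(n + 1))).2
    linarith

theorem zpow_mul_zpow_eq_of_add_eq {G₀ : Type*} [GroupWithZero G₀] (a : G₀) {k l m n : ℤ}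
    (hk : 0 ≤ k) (hl : 0 ≤ l) (hm : 0 ≤ m) (hn : 0 ≤ n) (h : k + l = m + n) :
    a ^ k * a ^ l = a ^ m * a ^ n := by
  rw [← zpow_add_of_nonneg₀ a hk hl, h, zpow_add_of_nonneg₀ a hm hn]

theorem tsum_zpow_two_mul_mul_add_one_sq {𝕜 : Type*} [NormedField 𝕜] [CompleteSpace 𝕜] {q : 𝕜}
    (hq : ‖q‖ < 1) :
    (∑' n : ℤ, q ^ (2 * n * (n + 1))) ^ 2 =
      2 * (∑' n : ℤ, q ^ (4 * n ^ 2)) * ∑' n : ℤ, q ^ (4 * n * (n + 1)) := by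
  have hA : Summable fun n : ℤ => ‖q ^ (2 * n * (n + 1))‖ := summable_norm_zpow_of_le hq fun n => by
    rcases le_or_gt 0 n with h | h <;> constructor <;> nlinarith
  have hB : Summable fun n : ℤ => ‖q ^ (4 * n ^ 2)‖ := summable_norm_zpow_of_le hq fun n => by
    rcases le_or_gt 0 n with h | h <;> constructor <;> nlinarith
  have hC : Summable fun n : ℤ => ‖q ^ (4 * n * (n + 1))‖ := summable_norm_zpow_of_le hq fun n => by
    rcases le_or_gt 0 n with h | h <;> constructor <;> nlinarith
  have hAA := summable_mul_of_summable_norm hA hA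
  calc (∑' n : ℤ, q ^ (2 * n * (n + 1))) ^ 2
      = ∑' p : ℤ × ℤ, q ^ (2 * p.1 * (p.1 + 1)) * q ^ (2 * p.2 * (p.2 + 1)) := by
        rw [sq, tsum_mul_tsum_of_summable_norm hA hA]
    _ = ∑' p : ℤ × ℤ, q ^ (4 * p.1 * (p.1 + 1)) * q ^ (4 * p.2 ^ 2) +
          ∑' p : ℤ × ℤ, q ^ (4 * p.1 ^ 2) * q ^ (4 * p.2 * (p.2 + 1)) := by
        rw [Int.tsum_prod_eq_tsum_even_add_tsum_odd hAA]
        congr 1 <;> refine tsum_congr fun p => zpow_mul_zpow_eq_of_add_eq q ?_ ?_ ?_ ?_ (by ring)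
        all_goals first | positivity | exact Int.mul_mul_add_one_nonneg (by norm_num) _
    _ = 2 * (∑' n : ℤ, q ^ (4 * n ^ 2)) * ∑' n : ℤ, q ^ (4 * n * (n + 1)) := by
        rw [← tsum_mul_tsum_of_summable_norm hC hB, ← tsum_mul_tsum_of_summable_norm hB hC]
        ring

/-- the theta-constant identity `z(q)² = 4·x(q)·y(q)`, i.e.
`θ₂(q⁴)⁴ = 4·θ₃(q⁸)²·θ₂(q⁸)²` written out as `q`-series. -/
theorem theta_identity_z_sq_eq_four_xy (q : ℂ) (hq : ‖q‖ < 1) :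
    q ^ 2 * (∑' n : ℤ, q ^ (2 * n * (n + 1))) ^ 4 =
      4 * (∑' n : ℤ, q ^ (4 * n ^ 2)) ^ 2 * (∑' n : ℤ, q ^ ((2 * n + 1) ^ 2)) ^ 2 := by
  have hodd : ∑' n : ℤ, q ^ ((2 * n + 1) ^ 2) = q * ∑' n : ℤ, q ^ (4 * n * (n + 1)) := by
    rw [← tsum_mul_left]
    refine tsum_congr fun n => ?_
    rw [show (2 * n + 1) ^ 2 = 1 + 4 * n * (n + 1) by ring,
      zpow_add_of_nonneg₀ q zero_le_one (Int.mul_mul_add_one_nonneg (by norm_num) n), zpow_one]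
  rw [hodd, show 4 = 2 * 2 from rfl, pow_mul, tsum_zpow_two_mul_mul_add_one_sq hq]
  ring
end

section
/- The logarithmic derivative of the Jacobi theta constant θ₃ at τ = i satisfies X₃(i) := 2·θ₃'(i)/θ₃(i) = i/2. Equivalently, at the level of the real series: ∑_{n∈ℤ} n²·exp(−π·n²) = (1/(4π)) · ∑_{n∈ℤ} exp(−π·n²). -/
open Complex

/-- The Jacobi theta constant `θ₃(τ) = ∑_{n∈ℤ} exp(πiτn²)`. -/
noncomputable def theta3 (τ : ℂ) : ℂ :=
  ∑' n : ℤ, Complex.exp ((Real.pi : ℂ) * I * τ * (n : ℂ) ^ 2)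

/-! `θ₃` is Mathlib's `jacobiTheta`, which satisfies `θ(-1/τ) = (-iτ)^{1/2} θ(τ)`. Since
`τ ↦ -1/τ` fixes `i` with derivative `-1`, differentiating this law at `i` gives
`-θ'(i) = -(i/2) θ(i) + θ'(i)`, i.e. `θ'(i) = (i/4) θ(i)`. At `τ = i` both `θ(i)` and
`θ'(i) / (πi)` are the real series `∑ exp(-πn²)` and `∑ n² exp(-πn²)`, and `θ(i) > 0`. -/

open Real Filter Topology

lemma theta3_eq_jacobiTheta : theta3 = jacobiTheta :=
  funext fun τ => tsum_congr fun n => by ring_nf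

lemma HasDerivAt.eq_of_comp_neg_inv_eq {f : ℂ → ℂ} {D k : ℂ} (hD : HasDerivAt f D I)
    (hf : ∀ᶠ τ in 𝓝 I, f (-τ⁻¹) = (-I * τ) ^ k * f τ) : D = I * k / 2 * f I := by
  have hI : -I * I = 1 := by simp
  have hinv : HasDerivAt (fun τ : ℂ => -τ⁻¹) (-1) I :=
    (hasDerivAt_inv I_ne_zero).fun_neg.congr_deriv (by simp)
  have hlhs : HasDerivAt (fun τ => f (-τ⁻¹)) (D * -1) I :=
    HasDerivAt.comp I (by simpa using hD) hinv
  have hpow : HasDerivAt (fun τ => (-I * τ) ^ k) (k * (-I * I) ^ (k - 1) * -I) I := by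
    simpa using ((hasDerivAt_id I).const_mul (-I)).cpow_const (c := k) (by simp [hI])
  have hrhs := hpow.mul hD
  rw [hI, one_cpow, one_cpow] at hrhs
  have := hlhs.unique (hrhs.congr_of_eventuallyEq hf)
  linear_combination -this / 2

lemma jacobiTheta_neg_inv {τ : ℂ} (hτ : 0 < τ.im) :
    jacobiTheta (-τ⁻¹) = (-I * τ) ^ (1 / 2 : ℂ) * jacobiTheta τ := by
  have := jacobiTheta_S_smul ⟨τ, hτ⟩
  rw [UpperHalfPlane.modular_S_smul] at this
  simpa [inv_neg] using this

lemma eventually_jacobiTheta_neg_inv_nhds_I :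
    ∀ᶠ τ in 𝓝 I, jacobiTheta (-τ⁻¹) = (-I * τ) ^ (1 / 2 : ℂ) * jacobiTheta τ :=
  Filter.mem_of_superset ((continuous_im.isOpen_preimage _ isOpen_Ioi).mem_nhds
    (by simp : 0 < I.im)) fun _ hτ => jacobiTheta_neg_inv hτ

lemma hasSum_jacobiTheta {τ : ℂ} (hτ : 0 < τ.im) :
    HasSum (fun n : ℤ => cexp (π * I * n ^ 2 * τ)) (jacobiTheta τ) := by
  simpa [jacobiTheta₂_term, ← jacobiTheta_eq_jacobiTheta₂] using hasSum_jacobiTheta₂_term 0 hτ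

lemma hasSum_deriv_jacobiTheta {τ : ℂ} (hτ : 0 < τ.im) :
    HasSum (fun n : ℤ => π * I * n ^ 2 * cexp (π * I * n ^ 2 * τ)) (deriv jacobiTheta τ) := by
  have hderiv : HasDerivAt jacobiTheta (jacobiTheta₂_fderiv 0 τ (0, 1)) τ := by
    rw [funext jacobiTheta_eq_jacobiTheta₂]
    exact ((hasFDerivAt_jacobiTheta₂ 0 hτ).comp τ (hasFDerivAt_prodMk_right 0 τ)).hasDerivAt
  rw [hderiv.deriv]
  refine ((ContinuousLinearMap.apply ℂ ℂ ((0 : ℂ), (1 : ℂ))).hasSum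
    (hasSum_jacobiTheta₂_term_fderiv 0 hτ)).congr_fun fun n => ?_
  simp [jacobiTheta₂_term_fderiv]
  ring

lemma cexp_pi_mul_I_mul_sq_mul_I (n : ℤ) :
    cexp (π * I * n ^ 2 * I) = Real.exp (-π * n ^ 2) := by
  rw [ofReal_exp]
  congr 1
  push_cast
  ring_nf
  simp

lemma jacobiTheta_I_eq : jacobiTheta I = ↑(∑' n : ℤ, Real.exp (-π * n ^ 2)) := by
  simp_rw [jacobiTheta, cexp_pi_mul_I_mul_sq_mul_I, ofReal_tsum]

lemma deriv_jacobiTheta_I_eq :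
    deriv jacobiTheta I = π * I * ↑(∑' n : ℤ, (n : ℝ) ^ 2 * Real.exp (-π * n ^ 2)) := by
  rw [← (hasSum_deriv_jacobiTheta (by simp)).tsum_eq, ofReal_tsum, ← tsum_mul_left]
  simp_rw [cexp_pi_mul_I_mul_sq_mul_I]
  push_cast
  ring_nf

lemma deriv_jacobiTheta_I_eq_I_div_four : deriv jacobiTheta I = I / 4 * jacobiTheta I := by
  rw [(differentiableAt_jacobiTheta (by simp)).hasDerivAt.eq_of_comp_neg_inv_eq
    eventually_jacobiTheta_neg_inv_nhds_I]
  ring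

lemma jacobiTheta_I_ne_zero : jacobiTheta I ≠ 0 := by
  have hsum : Summable fun n : ℤ => Real.exp (-π * n ^ 2) := by
    rw [← Complex.summable_ofReal]
    simpa [cexp_pi_mul_I_mul_sq_mul_I] using (hasSum_jacobiTheta (by simp : 0 < I.im)).summable
  rw [jacobiTheta_I_eq, ofReal_ne_zero]
  exact (hsum.tsum_pos (fun n => (Real.exp_pos _).le) 0 (Real.exp_pos _)).ne'

/-- the logarithmic derivative `X₃(i) = 2·θ₃'(i)/θ₃(i) = i/2`, and the
equivalent real-series identity
`∑_{n∈ℤ} n²·exp(−πn²) = (1/(4π))·∑_{n∈ℤ} exp(−πn²)`. -/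
theorem theta3_log_deriv_at_i :
    (∀ D : ℂ, HasDerivAt theta3 D I → 2 * D / theta3 I = I / 2) ∧
    (∑' n : ℤ, (n : ℝ) ^ 2 * Real.exp (-Real.pi * (n : ℝ) ^ 2)) =
      (1 / (4 * Real.pi)) * ∑' n : ℤ, Real.exp (-Real.pi * (n : ℝ) ^ 2) := by
  rw [theta3_eq_jacobiTheta]
  refine ⟨fun D hD => ?_, ?_⟩
  · rw [← hD.deriv, deriv_jacobiTheta_I_eq_I_div_four]
    field_simp [jacobiTheta_I_ne_zero]
    ring
  · have h := deriv_jacobiTheta_I_eq_I_div_four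
    rw [deriv_jacobiTheta_I_eq, jacobiTheta_I_eq] at h
    set A := ∑' n : ℤ, (n : ℝ) ^ 2 * Real.exp (-π * n ^ 2)
    set B := ∑' n : ℤ, Real.exp (-π * n ^ 2)
    have hAB : π * A = B / 4 := by
      apply ofReal_injective
      push_cast
      linear_combination (-I) * h + (π * A - B / 4) * I_sq
    field_simp
    linarith
end
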